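/- Let X be a finite-dimensional Banach space containing a subspace Y isometric to ℓ₂² that is not 1-complemented in X. Then Π₂(X, X) is not strictly convex: there exist two distinct projections P₁, P₂ : X → Y extending the identity on Y with π₂(P₁) = π₂(P₂) = π₂(I_Y) = √2. -/

import Mathlib

open scoped BigOperators

/-- The 2-summing norm of a continuous linear operator between real normed spaces. -/
noncomputable def pi2 {X Y : Type*} [NormedAddCommGroup X] [NormedSpace ℝ X]
    [NormedAddCommGroup Y] [NormedSpace ℝ Y] (T : X →L[ℝ] Y) : ℝ :=
  sSup { r : ℝ | ∃ (m : ℕ) (x : Fin m → X),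
    (∀ f : X →L[ℝ] ℝ, ∑ i, (f (x i)) ^ 2 ≤ ‖f‖ ^ 2) ∧
    r = Real.sqrt (∑ i, ‖T (x i)‖ ^ 2) }

/-!
Fix a linear isometry `e : Y ≃ ℓ₂ⁿ`. For an orthonormal basis `b` of `ℓ₂ⁿ`, Hahn–Banach extensions
`fᵢ` of the coordinate functionals `⟪bᵢ, e ·⟫` give a projection `P_b = ∑ fᵢ(·) e⁻¹bᵢ` onto `Y`
with `‖P_b x‖² = ∑ fᵢ(x)²`. Hence `∑ⱼ ‖P_b xⱼ‖² ≤ ∑ᵢ ‖fᵢ‖² ≤ n` for every family of weak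
`ℓ₂`-norm at most one, with equality for the family `e⁻¹bᵢ`, so `π₂(P_b) = √n`; on the same family
`P_b + P_b'` doubles every vector of `Y`, so `π₂(P_b + P_b') = 2√n` for any two bases.
If `Y` is not 1-complemented then `‖x‖ < ‖P_b x‖` for some `x`. Rotating `b` so that one of its
vectors points along `e (P_b x)` gives `b'` whose functional there is at most `‖x‖` at `x`,
while the corresponding coordinate of `P_b x` is `‖P_b x‖`; so `P_b' ≠ P_b`, and their midpoint
stays on the sphere of radius `√2` of `π₂`.
-/

open scoped InnerProductSpace

theorem sqrt_sum_norm_add_sq_le {ι Z : Type*} [Fintype ι] [SeminormedAddCommGroup Z]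
    (u v : ι → Z) :
    √(∑ i, ‖u i + v i‖ ^ 2) ≤ √(∑ i, ‖u i‖ ^ 2) + √(∑ i, ‖v i‖ ^ 2) := by
  simpa only [PiLp.norm_eq_of_L2, PiLp.add_apply, PiLp.toLp_apply] using
    norm_add_le (WithLp.toLp 2 u) (WithLp.toLp 2 v)

section TwoSumming

variable {X Z : Type*} [NormedAddCommGroup X] [NormedSpace ℝ X]
  [NormedAddCommGroup Z] [NormedSpace ℝ Z]

def WeakTwoNormLeOne {m : ℕ} (x : Fin m → X) : Prop :=
  ∀ f : X →L[ℝ] ℝ, ∑ i, f (x i) ^ 2 ≤ ‖f‖ ^ 2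

def IsTwoSummingBound (T : X →L[ℝ] Z) (C : ℝ) : Prop :=
  ∀ (m : ℕ) (x : Fin m → X), WeakTwoNormLeOne x → √(∑ i, ‖T (x i)‖ ^ 2) ≤ C

namespace IsTwoSummingBound

variable {S T : X →L[ℝ] Z} {C D : ℝ}

theorem pi2_le (h : IsTwoSummingBound T C) : pi2 T ≤ C :=
  csSup_le ⟨_, 0, Fin.elim0, fun f => by simp, rfl⟩ (by rintro r ⟨m, x, hx, rfl⟩; exact h m x hx)

theorem le_pi2 (h : IsTwoSummingBound T C) {m : ℕ} {x : Fin m → X} (hx : WeakTwoNormLeOne x) :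
    √(∑ i, ‖T (x i)‖ ^ 2) ≤ pi2 T :=
  le_csSup ⟨C, by rintro r ⟨m, x, hx, rfl⟩; exact h m x hx⟩ ⟨m, x, hx, rfl⟩

theorem add (hS : IsTwoSummingBound S C) (hT : IsTwoSummingBound T D) :
    IsTwoSummingBound (S + T) (C + D) := fun m x hx =>
  (sqrt_sum_norm_add_sq_le _ _).trans (add_le_add (hS m x hx) (hT m x hx))

end IsTwoSummingBound

end TwoSumming

theorem ContinuousLinearMap.exists_lt_norm_apply_of_norm_ne_one {X : Type*}
    [NormedAddCommGroup X] [NormedSpace ℝ X] {P : X →L[ℝ] X} {y : X} (hy : y ≠ 0) (hPy : P y = y)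
    (hP : ‖P‖ ≠ 1) : ∃ x, ‖x‖ < ‖P x‖ := by
  by_contra! h
  refine hP (le_antisymm (P.opNorm_le_bound zero_le_one fun x => by simpa using h x) ?_)
  have := P.le_opNorm y
  rw [hPy] at this
  exact le_of_mul_le_mul_right (by simpa using this) (norm_pos_iff.2 hy)

section HahnBanachProjection

variable {X E : Type*} [NormedAddCommGroup X] [NormedSpace ℝ X]
  [NormedAddCommGroup E] [InnerProductSpace ℝ E] {Y : Submodule ℝ X} {n : ℕ}
  (e : Y ≃ₗᵢ[ℝ] E) (b : OrthonormalBasis (Fin n) ℝ E)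

noncomputable def coordExtension (i : Fin n) : X →L[ℝ] ℝ :=
  (exists_extension_norm_eq Y (innerSL ℝ (b i) ∘L (e : Y →L[ℝ] E))).choose

theorem coordExtension_apply_coe (i : Fin n) (y : Y) :
    coordExtension e b i y = ⟪b i, e y⟫_ℝ :=
  (exists_extension_norm_eq Y (innerSL ℝ (b i) ∘L (e : Y →L[ℝ] E))).choose_spec.1 y

theorem norm_coordExtension_le (i : Fin n) : ‖coordExtension e b i‖ ≤ 1 := by
  rw [coordExtension, (exists_extension_norm_eq Y _).choose_spec.2]
  refine ContinuousLinearMap.opNorm_le_bound _ zero_le_one fun y => ?_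
  calc ‖⟪b i, e y⟫_ℝ‖ ≤ ‖b i‖ * ‖e y‖ := norm_inner_le_norm _ _
    _ = 1 * ‖y‖ := by rw [b.orthonormal.1 i, e.norm_map]

theorem coordExtension_apply_le (i : Fin n) (x : X) : coordExtension e b i x ≤ ‖x‖ :=
  calc coordExtension e b i x ≤ ‖coordExtension e b i‖ * ‖x‖ :=
        (le_abs_self _).trans ((coordExtension e b i).le_opNorm x)
    _ ≤ ‖x‖ := mul_le_of_le_one_left (norm_nonneg x) (norm_coordExtension_le e b i)

noncomputable def coordMap : X →L[ℝ] E := ∑ i, (coordExtension e b i).smulRight (b i)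

theorem coordMap_apply (x : X) :
    coordMap e b x = b.repr.symm (WithLp.toLp 2 fun i => coordExtension e b i x) := by
  simp [coordMap, ← b.sum_repr_symm]

theorem coordMap_apply_coe (y : Y) : coordMap e b y = e y := by
  simp [coordMap, coordExtension_apply_coe, b.sum_repr']

theorem inner_coordMap_apply (i : Fin n) (x : X) :
    ⟪b i, coordMap e b x⟫_ℝ = coordExtension e b i x := by
  rw [← b.repr_apply_apply, coordMap_apply, LinearIsometryEquiv.apply_symm_apply,
    PiLp.toLp_apply]

theorem norm_coordMap_apply_sq (x : X) :
    ‖coordMap e b x‖ ^ 2 = ∑ i, coordExtension e b i x ^ 2 := by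
  simp [coordMap_apply, EuclideanSpace.norm_sq_eq]

noncomputable def hahnBanachProjection : X →L[ℝ] X :=
  Y.subtypeL ∘L (e.symm : E →L[ℝ] Y) ∘L coordMap e b

theorem hahnBanachProjection_apply (x : X) :
    hahnBanachProjection e b x = e.symm (coordMap e b x) := rfl

theorem hahnBanachProjection_apply_mem (x : X) : hahnBanachProjection e b x ∈ Y :=
  (e.symm (coordMap e b x)).2

theorem hahnBanachProjection_apply_of_mem {y : X} (hy : y ∈ Y) :
    hahnBanachProjection e b y = y := by
  simpa [hahnBanachProjection_apply] using congrArg Subtype.val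
    (congrArg e.symm (coordMap_apply_coe e b ⟨y, hy⟩))

theorem norm_hahnBanachProjection_apply (x : X) :
    ‖hahnBanachProjection e b x‖ = ‖coordMap e b x‖ := by
  rw [hahnBanachProjection_apply, ← Submodule.coe_norm, e.symm.norm_map]

theorem weakTwoNormLeOne_basis : WeakTwoNormLeOne fun i => (e.symm (b i) : X) := by
  intro f
  have : FiniteDimensional ℝ E := Module.Finite.of_basis b.toBasis
  set g : E →L[ℝ] ℝ := f ∘L Y.subtypeL ∘L (e.symm : E →L[ℝ] Y)
  set v := (InnerProductSpace.toDual ℝ E).symm g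
  have hg : ∀ w, f (e.symm w) = ⟪v, w⟫_ℝ := fun w =>
    (InnerProductSpace.toDual_symm_apply (x := w) (y := g)).symm
  have hgf : ‖g‖ ≤ ‖f‖ := g.opNorm_le_bound (norm_nonneg f) fun w => by
    simpa [g, ← Submodule.coe_norm] using f.le_opNorm (e.symm w)
  calc ∑ i, f (e.symm (b i)) ^ 2 = ∑ i, ⟪v, b i⟫_ℝ * ⟪b i, v⟫_ℝ := by
        simp only [hg, sq, real_inner_comm]
    _ = ‖g‖ ^ 2 := by
        rw [b.sum_inner_mul_inner, real_inner_self_eq_norm_sq, LinearIsometryEquiv.norm_map]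
    _ ≤ ‖f‖ ^ 2 := pow_le_pow_left₀ (norm_nonneg g) hgf 2

theorem isTwoSummingBound_hahnBanachProjection :
    IsTwoSummingBound (hahnBanachProjection e b) √n := by
  intro m x hx
  refine Real.sqrt_le_sqrt ?_
  calc ∑ j, ‖hahnBanachProjection e b (x j)‖ ^ 2
        = ∑ i, ∑ j, coordExtension e b i (x j) ^ 2 := by
        simp only [norm_hahnBanachProjection_apply, norm_coordMap_apply_sq]
        exact Finset.sum_comm
    _ ≤ ∑ _i : Fin n, 1 := Finset.sum_le_sum fun i _ =>
        (hx _).trans (pow_le_one₀ (norm_nonneg _) (norm_coordExtension_le e b i))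
    _ = n := by simp

theorem sqrt_sum_norm_sq_apply_basis {T : X →L[ℝ] X} {c : ℝ} (hT : ∀ y ∈ Y, T y = c • y) :
    √(∑ i, ‖T (e.symm (b i))‖ ^ 2) = |c| * √n := by
  have hnorm : ∀ i, ‖T (e.symm (b i))‖ = |c| := fun i => by
    rw [hT _ (e.symm (b i)).2, norm_smul, ← Submodule.coe_norm, e.symm.norm_map,
      b.orthonormal.1 i, Real.norm_eq_abs, mul_one]
  simp only [hnorm, Finset.sum_const, Finset.card_univ, Fintype.card_fin, nsmul_eq_mul]
  rw [Real.sqrt_mul' _ (sq_nonneg _), Real.sqrt_sq (abs_nonneg c), mul_comm]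

theorem pi2_hahnBanachProjection : pi2 (hahnBanachProjection e b) = √n := by
  refine le_antisymm (isTwoSummingBound_hahnBanachProjection e b).pi2_le ?_
  have := (isTwoSummingBound_hahnBanachProjection e b).le_pi2 (weakTwoNormLeOne_basis e b)
  rwa [sqrt_sum_norm_sq_apply_basis e b (c := 1) fun y hy => by
    rw [one_smul, hahnBanachProjection_apply_of_mem e b hy], abs_one, one_mul] at this

theorem pi2_add_hahnBanachProjection (b' : OrthonormalBasis (Fin n) ℝ E) :
    pi2 (hahnBanachProjection e b + hahnBanachProjection e b') = 2 * √n := by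
  have hbound := (isTwoSummingBound_hahnBanachProjection e b).add
    (isTwoSummingBound_hahnBanachProjection e b')
  refine le_antisymm (hbound.pi2_le.trans_eq (two_mul _).symm) ?_
  have := hbound.le_pi2 (weakTwoNormLeOne_basis e b)
  rwa [sqrt_sum_norm_sq_apply_basis e b (c := 2) fun y hy => by
    rw [add_apply, hahnBanachProjection_apply_of_mem e b hy,
      hahnBanachProjection_apply_of_mem e b' hy, two_smul], abs_two] at this

theorem exists_hahnBanachProjection_ne {x : X} (hx : ‖x‖ < ‖hahnBanachProjection e b x‖) :
    ∃ b' : OrthonormalBasis (Fin n) ℝ E, hahnBanachProjection e b' ≠ hahnBanachProjection e b := by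
  set u := coordMap e b x
  rw [norm_hahnBanachProjection_apply] at hx
  have hu : 0 < ‖u‖ := (norm_nonneg x).trans_lt hx
  have : Nontrivial E := nontrivial_of_ne u 0 (norm_pos_iff.1 hu)
  have : FiniteDimensional ℝ E := Module.Finite.of_basis b.toBasis
  obtain ⟨i₀⟩ := b.toBasis.index_nonempty
  obtain ⟨b', hb'⟩ := Orthonormal.exists_orthonormalBasis_extension_of_card_eq
    (v := fun _ => ‖u‖⁻¹ • u) (s := {i₀}) (Module.finrank_eq_card_basis b.toBasis)
    ⟨fun _ => by simp [norm_smul, hu.ne'],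
      fun i j hij => (hij (Subtype.ext (i.2.trans j.2.symm))).elim⟩
  refine ⟨b', fun h => hx.not_ge ?_⟩
  have hcoord : coordMap e b' x = u := e.symm.injective (Subtype.ext (by
    simpa only [hahnBanachProjection_apply] using congrArg (· x) h))
  calc ‖u‖ = ⟪b' i₀, coordMap e b' x⟫_ℝ := by
        rw [hcoord, hb' i₀ rfl, real_inner_smul_left, real_inner_self_eq_norm_sq]
        field_simp
    _ = coordExtension e b' i₀ x := inner_coordMap_apply e b' i₀ x
    _ ≤ ‖x‖ := coordExtension_apply_le e b' i₀ x

end HahnBanachProjection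

theorem pi2_not_strictly_convex_of_non_complemented_ell2
    {X : Type*} [NormedAddCommGroup X] [NormedSpace ℝ X]
    (Y : Submodule ℝ X) (hiso : Nonempty (Y ≃ₗᵢ[ℝ] EuclideanSpace ℝ (Fin 2)))
    (hnotcompl : ¬ ∃ P : X →L[ℝ] X,
      (∀ x : X, P x ∈ Y) ∧ (∀ y ∈ Y, P y = y) ∧ ‖P‖ = 1) :
    (∃ P₁ P₂ : X →L[ℝ] X, P₁ ≠ P₂ ∧
      (∀ x : X, P₁ x ∈ Y) ∧ (∀ y ∈ Y, P₁ y = y) ∧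
      (∀ x : X, P₂ x ∈ Y) ∧ (∀ y ∈ Y, P₂ y = y) ∧
      pi2 P₁ = Real.sqrt 2 ∧ pi2 P₂ = Real.sqrt 2) ∧
    ¬ (∀ S T : X →L[ℝ] X, pi2 S = pi2 T → pi2 S = pi2 (S + T) / 2 → S = T) := by
  obtain ⟨e⟩ := hiso
  set b := EuclideanSpace.basisFun (Fin 2) ℝ
  have hy₀ : (e.symm (b 0) : X) ≠ 0 := by simpa using b.orthonormal.ne_zero 0
  obtain ⟨x, hx⟩ := ContinuousLinearMap.exists_lt_norm_apply_of_norm_ne_one hy₀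
    (hahnBanachProjection_apply_of_mem e b (e.symm (b 0)).2) fun h =>
      hnotcompl ⟨_, hahnBanachProjection_apply_mem e b,
        fun _ => hahnBanachProjection_apply_of_mem e b, h⟩
  obtain ⟨b', hne⟩ := exists_hahnBanachProjection_ne e b hx
  have hpi2 : ∀ c : OrthonormalBasis (Fin 2) ℝ _, pi2 (hahnBanachProjection e c) = √2 := by
    exact_mod_cast pi2_hahnBanachProjection e
  refine ⟨⟨_, _, hne.symm, hahnBanachProjection_apply_mem e b,
    fun _ => hahnBanachProjection_apply_of_mem e b, hahnBanachProjection_apply_mem e b',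
    fun _ => hahnBanachProjection_apply_of_mem e b', hpi2 b, hpi2 b'⟩,
    fun h => hne (h _ _ ?_ ?_).symm⟩
  · rw [hpi2, hpi2]
  · rw [pi2_add_hahnBanachProjection, hpi2]
    push_cast
    ring
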